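/- (Flipout variance theorem, flipout case) Suppose Δ_n = Ŵ ∘ r_n s_nᵀ where Ŵ is a shared base perturbation and (r_n, s_n) are independent sign vectors across n, all independent of the i.i.d. inputs. Then Var(G_B) = α/N + ((N-1)/N)·γ, where γ = E_{x,x'}[Cov_Ŵ(E[g(x,Δ)|x,Ŵ], E[g(x',Δ')|x',Ŵ] | x,x')] and α is the single-example gradient variance. -/

import Mathlib

open MeasureTheory ProbabilityTheory
open scoped BigOperators

/-- The flipout perturbation `Ŵ ∘ r sᵀ`: elementwise product of the base
perturbation with the rank-one sign matrix `r sᵀ`. -/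
def flipPert {p q : ℕ} (w : Fin p → Fin q → ℝ)
    (z : (Fin p → ℝ) × (Fin q → ℝ)) : Fin p → Fin q → ℝ :=
  fun i j => w i j * (z.1 i * z.2 j)

/-!
Write `Yₙ = g(xₙ, Ŵ ∘ rₙ sₙᵀ)`. The variance of the average is `N⁻²` times the sum of all
covariances `Cov(Yₙ, Yₘ)`. The `N` diagonal terms equal `α` because the triples
`(xₙ, Ŵ, (rₙ, sₙ))` are identically distributed. For `n ≠ m` the five variables
`xₙ, xₘ, Ŵ, (rₙ, sₙ), (rₘ, sₘ)` are independent, so `E[Yₙ Yₘ]` is an integral against a product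
measure. Since the two sign pairs enter through different factors, Fubini integrates them out
separately, which gives `E_{x,x'} E_Ŵ[ḡ(x, Ŵ) ḡ(x', Ŵ)]` with `ḡ(x, w) = E_z g(x, w ∘ z)`;
subtracting `E[Yₙ] E[Yₘ]` leaves `γ`.
-/

lemma measurable_flipPert {p q : ℕ} :
    Measurable (fun wz : (Fin p → Fin q → ℝ) × ((Fin p → ℝ) × (Fin q → ℝ)) =>
      flipPert wz.1 wz.2) := by
  unfold flipPert
  fun_prop

lemma variance_average_eq_of_covariance {Ω ι : Type*} [MeasurableSpace Ω] {μ : Measure Ω}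
    [IsFiniteMeasure μ] [Fintype ι] {Y : ι → Ω → ℝ} (hY : ∀ i, MemLp (Y i) 2 μ) {v c : ℝ}
    (hdiag : ∀ i, Var[Y i; μ] = v) (hoff : ∀ i j, i ≠ j → cov[Y i, Y j; μ] = c) :
    Var[fun ω => (Fintype.card ι : ℝ)⁻¹ * ∑ i, Y i ω; μ]
      = v / Fintype.card ι + (Fintype.card ι - 1) / Fintype.card ι * c := by
  classical
  have hrow : ∀ i, ∑ j, cov[Y i, Y j; μ] = v + (Fintype.card ι - 1) * c := by
    intro i
    rw [← Finset.add_sum_erase _ _ (Finset.mem_univ i), covariance_self (hY i).aemeasurable,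
      hdiag, Finset.sum_congr rfl fun j hj => hoff i j (Finset.ne_of_mem_erase hj).symm,
      Finset.sum_const, Finset.card_erase_of_mem (Finset.mem_univ i), Finset.card_univ,
      nsmul_eq_mul, Nat.cast_pred (Fintype.card_pos_iff.mpr ⟨i⟩)]
  rw [variance_const_mul, variance_fun_sum hY, Finset.sum_congr rfl fun i _ => hrow i,
    Finset.sum_const, Finset.card_univ, nsmul_eq_mul]
  rcases eq_or_ne (Fintype.card ι : ℝ) 0 with h | h
  · simp [h]
  · field_simp

namespace ProbabilityTheory.iIndepFun

variable {Ω ι : Type*} [MeasurableSpace Ω] {μ : Measure Ω}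
  {β : ι → Type*} {m : ∀ i, MeasurableSpace (β i)} {f : ∀ i, Ω → β i}

lemma map_prodMk_prodMk_eq (h : iIndepFun f μ) (hf : ∀ i, Measurable (f i)) {i j k : ι}
    (hij : i ≠ j) (hik : i ≠ k) (hjk : j ≠ k) :
    μ.map (fun ω => (f i ω, (f j ω, f k ω)))
      = (μ.map (f i)).prod ((μ.map (f j)).prod (μ.map (f k))) := by
  have := h.isProbabilityMeasure
  rw [((h.indepFun_prodMk hf j k i hij.symm hik.symm).symm).map_prod_eq_prod_map_map
      (hf i).aemeasurable ((hf j).prodMk (hf k)).aemeasurable,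
    (h.indepFun hjk).map_prod_eq_prod_map_map (hf j).aemeasurable (hf k).aemeasurable]

lemma map_prodMk_prodMk_prodMk_eq [DecidableEq ι] (h : iIndepFun f μ)
    (hf : ∀ i, Measurable (f i)) {i j k l e : ι} (hij : i ≠ j)
    (hdisj : Disjoint ({i, j} : Finset ι) {k, l, e}) (hkl : k ≠ l) (hke : k ≠ e) (hle : l ≠ e) :
    μ.map (fun ω => ((f i ω, f j ω), (f k ω, (f l ω, f e ω))))
      = ((μ.map (f i)).prod (μ.map (f j))).prod
          ((μ.map (f k)).prod ((μ.map (f l)).prod (μ.map (f e)))) := by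
  have := h.isProbabilityMeasure
  have hpair : IndepFun (fun ω => (f i ω, f j ω)) (fun ω => (f k ω, (f l ω, f e ω))) μ :=
    (h.indepFun_finset _ _ hdisj hf).comp
      ((measurable_pi_apply ⟨i, by simp⟩).prodMk (measurable_pi_apply ⟨j, by simp⟩))
      ((measurable_pi_apply ⟨k, by simp⟩).prodMk
        ((measurable_pi_apply ⟨l, by simp⟩).prodMk (measurable_pi_apply ⟨e, by simp⟩)))
  rw [hpair.map_prod_eq_prod_map_map ((hf i).prodMk (hf j)).aemeasurable
      ((hf k).prodMk ((hf l).prodMk (hf e))).aemeasurable,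
    (h.indepFun hij).map_prod_eq_prod_map_map (hf i).aemeasurable (hf j).aemeasurable,
    h.map_prodMk_prodMk_eq hf hkl hke hle]

end ProbabilityTheory.iIndepFun

section SharedPerturbation

variable {A C B : Type*} [MeasurableSpace A] [MeasurableSpace C] [MeasurableSpace B]
  {ρx : Measure A} {ρW : Measure C} {ρz : Measure B} [SFinite ρx] [SFinite ρW] [SFinite ρz]
  {F : A → C → B → ℝ}

/-- The paper's `γ`, where `∫ z, F a w z ∂ρz` is the conditional mean of the gradient given the
input `a` and the shared perturbation `w`. -/
noncomputable def sharedCovariance (ρx : Measure A) (ρW : Measure C) (ρz : Measure B)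
    (F : A → C → B → ℝ) : ℝ :=
  ∫ a, ∫ a',
    ((∫ w, (∫ z, F a w z ∂ρz) * (∫ z, F a' w z ∂ρz) ∂ρW)
      - (∫ w, ∫ z, F a w z ∂ρz ∂ρW) * (∫ w, ∫ z, F a' w z ∂ρz ∂ρW)) ∂ρx ∂ρx

lemma integral_prod_prod
    (hF : Integrable (fun t : A × C × B => F t.1 t.2.1 t.2.2) (ρx.prod (ρW.prod ρz))) :
    ∫ t, F t.1 t.2.1 t.2.2 ∂(ρx.prod (ρW.prod ρz)) = ∫ a, ∫ w, ∫ z, F a w z ∂ρz ∂ρW ∂ρx := by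
  rw [integral_prod _ hF]
  refine integral_congr_ae ?_
  filter_upwards [hF.prod_right_ae] with a ha
  exact integral_prod _ ha

lemma Integrable.integral_prod_prod_left
    (hF : Integrable (fun t : A × C × B => F t.1 t.2.1 t.2.2) (ρx.prod (ρW.prod ρz))) :
    Integrable (fun a => ∫ w, ∫ z, F a w z ∂ρz ∂ρW) ρx := by
  refine hF.integral_prod_left.congr ?_
  filter_upwards [hF.prod_right_ae] with a ha
  exact integral_prod _ ha

lemma ae_integral_mul_integral_eq_integral_prod
    (hK : Integrable (fun t : (A × A) × C × B × B => F t.1.1 t.2.1 t.2.2.1 * F t.1.2 t.2.1 t.2.2.2)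
      ((ρx.prod ρx).prod (ρW.prod (ρz.prod ρz)))) :
    (fun aa : A × A => ∫ w, (∫ z, F aa.1 w z ∂ρz) * (∫ z, F aa.2 w z ∂ρz) ∂ρW)
      =ᵐ[ρx.prod ρx]
        fun aa => ∫ t, F aa.1 t.1 t.2.1 * F aa.2 t.1 t.2.2 ∂(ρW.prod (ρz.prod ρz)) := by
  filter_upwards [hK.prod_right_ae] with aa haa
  rw [integral_prod _ haa]
  simp_rw [integral_prod_mul]

lemma sharedCovariance_eq
    (hF : Integrable (fun t : A × C × B => F t.1 t.2.1 t.2.2) (ρx.prod (ρW.prod ρz)))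
    (hK : Integrable (fun t : (A × A) × C × B × B => F t.1.1 t.2.1 t.2.2.1 * F t.1.2 t.2.1 t.2.2.2)
      ((ρx.prod ρx).prod (ρW.prod (ρz.prod ρz)))) :
    sharedCovariance ρx ρW ρz F
      = (∫ t, F t.1.1 t.2.1 t.2.2.1 * F t.1.2 t.2.1 t.2.2.2
            ∂((ρx.prod ρx).prod (ρW.prod (ρz.prod ρz))))
        - (∫ t, F t.1 t.2.1 t.2.2 ∂(ρx.prod (ρW.prod ρz))) ^ 2 := by
  have hcross := ae_integral_mul_integral_eq_integral_prod hK
  have hT := hK.integral_prod_left.congr hcross.symm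
  have hM := Integrable.integral_prod_prod_left hF
  rw [sharedCovariance, integral_integral (hT.sub (hM.mul_prod hM)),
    integral_sub hT (hM.mul_prod hM), integral_congr_ae hcross, ← integral_prod _ hK,
    integral_prod_mul (fun a => ∫ w, ∫ z, F a w z ∂ρz ∂ρW) (fun a => ∫ w, ∫ z, F a w z ∂ρz ∂ρW),
    integral_prod_prod hF, sq]

variable {Ω : Type*} [MeasurableSpace Ω] {μ : Measure Ω} [IsProbabilityMeasure μ]

lemma covariance_eq_sharedCovariance {X₁ X₂ : Ω → A} {W : Ω → C} {Z₁ Z₂ : Ω → B}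
    (hX₁ : Measurable X₁) (hX₂ : Measurable X₂) (hW : Measurable W)
    (hZ₁ : Measurable Z₁) (hZ₂ : Measurable Z₂)
    (hF : Measurable (fun t : A × C × B => F t.1 t.2.1 t.2.2))
    (hlaw₁ : μ.map (fun ω => (X₁ ω, (W ω, Z₁ ω))) = ρx.prod (ρW.prod ρz))
    (hlaw₂ : μ.map (fun ω => (X₂ ω, (W ω, Z₂ ω))) = ρx.prod (ρW.prod ρz))
    (hlaw : μ.map (fun ω => ((X₁ ω, X₂ ω), (W ω, (Z₁ ω, Z₂ ω))))
      = (ρx.prod ρx).prod (ρW.prod (ρz.prod ρz)))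
    (hY₁ : MemLp (fun ω => F (X₁ ω) (W ω) (Z₁ ω)) 2 μ)
    (hY₂ : MemLp (fun ω => F (X₂ ω) (W ω) (Z₂ ω)) 2 μ) :
    cov[fun ω => F (X₁ ω) (W ω) (Z₁ ω), fun ω => F (X₂ ω) (W ω) (Z₂ ω); μ]
      = sharedCovariance ρx ρW ρz F := by
  have htuple : Measurable (fun ω => ((X₁ ω, X₂ ω), (W ω, (Z₁ ω, Z₂ ω)))) :=
    (hX₁.prodMk hX₂).prodMk (hW.prodMk (hZ₁.prodMk hZ₂))
  have hK₁ : Measurable (fun t : (A × A) × C × B × B => F t.1.1 t.2.1 t.2.2.1) := by fun_prop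
  have hK₂ : Measurable (fun t : (A × A) × C × B × B => F t.1.2 t.2.1 t.2.2.2) := by fun_prop
  have hK : Integrable
      (fun t : (A × A) × C × B × B => F t.1.1 t.2.1 t.2.2.1 * F t.1.2 t.2.1 t.2.2.2)
      ((ρx.prod ρx).prod (ρW.prod (ρz.prod ρz))) := by
    rw [← hlaw]
    exact ((memLp_map_measure_iff hK₁.aestronglyMeasurable htuple.aemeasurable).mpr
      hY₁).integrable_mul
        ((memLp_map_measure_iff hK₂.aestronglyMeasurable htuple.aemeasurable).mpr hY₂)
  have hFint : Integrable (fun t : A × C × B => F t.1 t.2.1 t.2.2) (ρx.prod (ρW.prod ρz)) := by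
    rw [← hlaw₁]
    exact (integrable_map_measure hF.aestronglyMeasurable
      (hX₁.prodMk (hW.prodMk hZ₁)).aemeasurable).mpr (hY₁.integrable one_le_two)
  have hmean₁ : ∫ ω, F (X₁ ω) (W ω) (Z₁ ω) ∂μ = ∫ t, F t.1 t.2.1 t.2.2 ∂(ρx.prod (ρW.prod ρz)) := by
    rw [← hlaw₁, integral_map (hX₁.prodMk (hW.prodMk hZ₁)).aemeasurable hF.aestronglyMeasurable]
  have hmean₂ : ∫ ω, F (X₂ ω) (W ω) (Z₂ ω) ∂μ = ∫ t, F t.1 t.2.1 t.2.2 ∂(ρx.prod (ρW.prod ρz)) := by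
    rw [← hlaw₂, integral_map (hX₂.prodMk (hW.prodMk hZ₂)).aemeasurable hF.aestronglyMeasurable]
  have hcross : ∫ ω, F (X₁ ω) (W ω) (Z₁ ω) * F (X₂ ω) (W ω) (Z₂ ω) ∂μ
      = ∫ t, F t.1.1 t.2.1 t.2.2.1 * F t.1.2 t.2.1 t.2.2.2
          ∂((ρx.prod ρx).prod (ρW.prod (ρz.prod ρz))) := by
    rw [← hlaw]
    exact (integral_map htuple.aemeasurable (hK₁.mul hK₂).aestronglyMeasurable).symm
  rw [covariance_eq_sub hY₁ hY₂, Pi.mul_def, hcross, hmean₁, hmean₂, sharedCovariance_eq hFint hK,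
    sq]

theorem variance_average_eq_sharedCovariance {ι : Type*} [Fintype ι]
    {X : ι → Ω → A} {W : Ω → C} {Z : ι → Ω → B}
    (hX : ∀ n, Measurable (X n)) (hW : Measurable W) (hZ : ∀ n, Measurable (Z n))
    (hF : Measurable (fun t : A × C × B => F t.1 t.2.1 t.2.2))
    (hlaw : ∀ n, μ.map (fun ω => (X n ω, (W ω, Z n ω))) = ρx.prod (ρW.prod ρz))
    (hlaw₂ : ∀ n m, n ≠ m → μ.map (fun ω => ((X n ω, X m ω), (W ω, (Z n ω, Z m ω))))
      = (ρx.prod ρx).prod (ρW.prod (ρz.prod ρz)))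
    (i₀ : ι) (hL2 : MemLp (fun ω => F (X i₀ ω) (W ω) (Z i₀ ω)) 2 μ) :
    Var[fun ω => (Fintype.card ι : ℝ)⁻¹ * ∑ n, F (X n ω) (W ω) (Z n ω); μ]
      = Var[fun ω => F (X i₀ ω) (W ω) (Z i₀ ω); μ] / Fintype.card ι
        + (Fintype.card ι - 1) / Fintype.card ι * sharedCovariance ρx ρW ρz F := by
  have htuple : ∀ n, Measurable (fun ω => (X n ω, (W ω, Z n ω))) :=
    fun n => (hX n).prodMk (hW.prodMk (hZ n))
  have hident : ∀ n, IdentDistrib (fun ω => F (X i₀ ω) (W ω) (Z i₀ ω))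
      (fun ω => F (X n ω) (W ω) (Z n ω)) μ μ := fun n =>
    IdentDistrib.comp ⟨(htuple i₀).aemeasurable, (htuple n).aemeasurable, by rw [hlaw, hlaw]⟩ hF
  have hY : ∀ n, MemLp (fun ω => F (X n ω) (W ω) (Z n ω)) 2 μ :=
    fun n => (hident n).memLp_snd hL2
  exact variance_average_eq_of_covariance hY (fun n => (hident n).variance_eq.symm)
    fun n m hnm => covariance_eq_sharedCovariance (hX n) (hX m) hW (hZ n) (hZ m) hF
      (hlaw n) (hlaw m) (hlaw₂ n m hnm) (hY n) (hY m)

end SharedPerturbation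

theorem flipout_variance_flipout_case
    {Ω A : Type} [MeasurableSpace Ω] [MeasurableSpace A]
    (μ : Measure Ω) [IsProbabilityMeasure μ]
    {N p q : ℕ} (hN : 0 < N)
    (x : Fin N → Ω → A) (W : Ω → Fin p → Fin q → ℝ)
    (r : Fin N → Ω → Fin p → ℝ) (s : Fin N → Ω → Fin q → ℝ)
    (g : A → (Fin p → Fin q → ℝ) → ℝ)
    (hx : ∀ n, Measurable (x n)) (hW : Measurable W)
    (hr : ∀ n, Measurable (r n)) (hs : ∀ n, Measurable (s n))
    (hg : Measurable (Function.uncurry g))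
    -- the inputs, the per-example sign-vector pairs, and the base
    -- perturbation are all jointly independent
    (hjoint : iIndepFun
      (β := fun i : Fin N ⊕ Fin N ⊕ Unit =>
        match i with
        | .inl _ => A
        | .inr (.inl _) => (Fin p → ℝ) × (Fin q → ℝ)
        | .inr (.inr _) => Fin p → Fin q → ℝ)
      (m := fun i => match i with
        | .inl _ => inferInstance
        | .inr (.inl _) => inferInstance
        | .inr (.inr _) => inferInstance)
      (fun i => match i with
        | .inl n => x n
        | .inr (.inl n) => fun ω => (r n ω, s n ω)
        | .inr (.inr _) => W) μ)
    -- identical distributions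
    (hxid : ∀ n, Measure.map (x n) μ = Measure.map (x ⟨0, hN⟩) μ)
    (hrsid : ∀ n, Measure.map (fun ω => (r n ω, s n ω)) μ
      = Measure.map (fun ω => (r ⟨0, hN⟩ ω, s ⟨0, hN⟩ ω)) μ)
    -- square integrability of the single-example gradient
    (hL2 : MemLp (fun ω =>
      g (x ⟨0, hN⟩ ω) (flipPert (W ω) (r ⟨0, hN⟩ ω, s ⟨0, hN⟩ ω))) 2 μ) :
    variance (fun ω =>
        (N : ℝ)⁻¹ * ∑ n, g (x n ω) (flipPert (W ω) (r n ω, s n ω))) μ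
      = variance (fun ω =>
          g (x ⟨0, hN⟩ ω) (flipPert (W ω) (r ⟨0, hN⟩ ω, s ⟨0, hN⟩ ω))) μ / N
        + ((N : ℝ) - 1) / N *
          ∫ a, ∫ a',
            ((∫ w, (∫ z, g a (flipPert w z)
                    ∂(Measure.map (fun ω => (r ⟨0, hN⟩ ω, s ⟨0, hN⟩ ω)) μ)) *
                  (∫ z, g a' (flipPert w z)
                    ∂(Measure.map (fun ω => (r ⟨0, hN⟩ ω, s ⟨0, hN⟩ ω)) μ))
                ∂(Measure.map W μ))
              - (∫ w, ∫ z, g a (flipPert w z)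
                    ∂(Measure.map (fun ω => (r ⟨0, hN⟩ ω, s ⟨0, hN⟩ ω)) μ)
                  ∂(Measure.map W μ)) *
                (∫ w, ∫ z, g a' (flipPert w z)
                    ∂(Measure.map (fun ω => (r ⟨0, hN⟩ ω, s ⟨0, hN⟩ ω)) μ)
                  ∂(Measure.map W μ)))
            ∂(Measure.map (x ⟨0, hN⟩) μ) ∂(Measure.map (x ⟨0, hN⟩) μ) := by
  have hlaw : ∀ n, μ.map (fun ω => (x n ω, (W ω, (r n ω, s n ω))))
      = (μ.map (x ⟨0, hN⟩)).prod
          ((μ.map W).prod (μ.map (fun ω => (r ⟨0, hN⟩ ω, s ⟨0, hN⟩ ω)))) := fun n => by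
    refine (hjoint.map_prodMk_prodMk_eq
      (by rintro (n | n | u); exacts [hx n, (hr n).prodMk (hs n), hW])
      (i := .inl n) (j := .inr (.inr ())) (k := .inr (.inl n))
      (by simp) (by simp) (by simp)).trans ?_
    dsimp only
    rw [hxid n, hrsid n]
  have hlaw₂ : ∀ n m, n ≠ m →
      μ.map (fun ω => ((x n ω, x m ω), (W ω, ((r n ω, s n ω), (r m ω, s m ω)))))
        = ((μ.map (x ⟨0, hN⟩)).prod (μ.map (x ⟨0, hN⟩))).prod ((μ.map W).prod
            ((μ.map (fun ω => (r ⟨0, hN⟩ ω, s ⟨0, hN⟩ ω))).prod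
              (μ.map (fun ω => (r ⟨0, hN⟩ ω, s ⟨0, hN⟩ ω))))) := fun n m hnm => by
    refine (hjoint.map_prodMk_prodMk_prodMk_eq
      (by rintro (n | n | u); exacts [hx n, (hr n).prodMk (hs n), hW])
      (i := .inl n) (j := .inl m) (k := .inr (.inr ())) (l := .inr (.inl n)) (e := .inr (.inl m))
      (by simpa using hnm) (by simp) (by simp) (by simp) (by simpa using hnm)).trans ?_
    dsimp only
    rw [hxid n, hxid m, hrsid n, hrsid m]
  have hF : Measurable (fun t : A × (Fin p → Fin q → ℝ) × ((Fin p → ℝ) × (Fin q → ℝ)) =>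
      g t.1 (flipPert t.2.1 t.2.2)) :=
    hg.comp (measurable_fst.prodMk (measurable_flipPert.comp measurable_snd))
  have key := variance_average_eq_sharedCovariance (F := fun a w z => g a (flipPert w z))
    hx hW (fun n => (hr n).prodMk (hs n)) hF hlaw hlaw₂ ⟨0, hN⟩ hL2
  rwa [Fintype.card_fin] at key
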